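/- (Lemma, part 1, characteristic-root form.) Let r, K, d1, d2, c1, c2, e1, e2 > 0 and τ1, τ2 ≥ 0 satisfy e1·c1·K·max{1/3, 1 - c1·d2/(e2·c2·r)} < d1 < e1·c1·K, and set x0 = d1/(e1·c1), y0 = (r/c1)·(1 - d1/(e1·c1·K)). Then for every λ ∈ ℂ with Re λ ≥ 0 the characteristic quasi-polynomial Q(λ) = Q1(λ)·Q2(λ) is nonzero, where Q1(λ) = (λ + (r/K)·x0)·(λ + d1 - d1·e^{-λτ1}) + c1·d1·y0·e^{-λτ1} and Q2(λ) = λ + d2 - e2·c2·y0·e^{-λτ2}; i.e. all characteristic roots of the linearization of system (1) at (x0, y0, 0) lie in the open left half-plane. -/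

import Mathlib

/-!
On `Re λ ≥ 0` every delay factor satisfies `‖e^{-λτ}‖ ≤ 1`.  For `Q2` this bounds the real part:
`Re Q2(λ) ≥ d2 - e2 c2 y0 > 0`.  For `Q1`, write `a = (r/K) x0` and `b = c1 y0`; then `Q1(λ) = 0`
means `(λ + a)(λ + d1) = d1 (λ + a - b) e^{-λτ1}`.  The left side has modulus at least
`d1 ‖λ + a‖`, while `0 < b < 2a` gives `‖λ + a - b‖ < ‖λ + a‖`, so the right side is strictly
smaller.  The two branches of the lower bound on `d1` are exactly `b < 2a` and `e2 c2 y0 < d2`.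
-/

open Complex

lemma norm_exp_neg_mul_ofReal_le_one {z : ℂ} {τ : ℝ} (hz : 0 ≤ z.re) (hτ : 0 ≤ τ) :
    ‖exp (-z * τ)‖ ≤ 1 := by
  rw [norm_exp, Real.exp_le_one_iff]
  simpa [mul_re] using mul_nonneg hz hτ

lemma norm_sub_ofReal_lt_norm {w : ℂ} {b : ℝ} (hb : 0 < b) (hbw : b < 2 * w.re) :
    ‖w - b‖ < ‖w‖ := by
  refine lt_of_pow_lt_pow_left₀ 2 (norm_nonneg _) ?_
  rw [Complex.sq_norm, Complex.sq_norm, normSq_apply, normSq_apply]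
  simp only [sub_re, sub_im, ofReal_re, ofReal_im, sub_zero]
  nlinarith

lemma le_norm_add_ofReal {z : ℂ} {d : ℝ} (hz : 0 ≤ z.re) : d ≤ ‖z + d‖ := by
  have := re_le_norm (z + d)
  simp only [add_re, ofReal_re] at this
  linarith

lemma add_sub_mul_ne_zero {z w : ℂ} {a b : ℝ} (hz : 0 ≤ z.re) (hba : |b| < a) (hw : ‖w‖ ≤ 1) :
    z + a - b * w ≠ 0 := by
  have hbw : b * w.re ≤ |b| := by
    calc b * w.re ≤ |b * w.re| := le_abs_self _
      _ = |b| * |w.re| := abs_mul _ _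
      _ ≤ |b| * 1 := by gcongr; exact (abs_re_le_norm w).trans hw
      _ = |b| := mul_one _
  intro h
  have := congrArg re h
  simp only [sub_re, add_re, ofReal_re, re_ofReal_mul, zero_re] at this
  linarith

lemma mul_add_sub_mul_add_mul_ne_zero {z w : ℂ} {a b d : ℝ} (hz : 0 ≤ z.re) (hd : 0 < d)
    (hb : 0 < b) (hba : b < 2 * a) (hw : ‖w‖ ≤ 1) :
    (z + a) * (z + d - d * w) + d * b * w ≠ 0 := by
  intro h
  have key : (z + a) * (z + d) = d * (z + a - b) * w := by linear_combination h
  have hshift : ‖z + a - b‖ < ‖z + a‖ :=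
    norm_sub_ofReal_lt_norm hb (by simp only [add_re, ofReal_re]; linarith)
  have hnorm := congrArg norm key
  simp only [norm_mul, norm_real, Real.norm_of_nonneg hd.le] at hnorm
  have : d * ‖z + a - b‖ * ‖w‖ < ‖z + a‖ * ‖z + d‖ :=
    calc d * ‖z + a - b‖ * ‖w‖ ≤ d * ‖z + a - b‖ := mul_le_of_le_one_right (by positivity) hw
      _ < d * ‖z + a‖ := mul_lt_mul_of_pos_left hshift hd
      _ = ‖z + a‖ * d := mul_comm _ _
      _ ≤ ‖z + a‖ * ‖z + d‖ := by gcongr; exact le_norm_add_ofReal hz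
  linarith

theorem charPoly_roots_left_halfplane_general
    (r K d1 d2 c1 c2 e1 e2 τ1 τ2 x0 y0 : ℝ)
    (hr : 0 < r) (hK : 0 < K) (hd1 : 0 < d1)
    (hc1 : 0 < c1) (hc2 : 0 < c2) (he1 : 0 < e1) (he2 : 0 < e2)
    (hτ1 : 0 ≤ τ1) (hτ2 : 0 ≤ τ2)
    (hx0 : x0 = d1 / (e1 * c1))
    (hy0 : y0 = r / c1 * (1 - d1 / (e1 * c1 * K)))
    (hlow : e1 * c1 * K * max (1 / 3) (1 - c1 * d2 / (e2 * c2 * r)) < d1)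
    (hhigh : d1 < e1 * c1 * K) :
    ∀ lam : ℂ, 0 ≤ lam.re →
      ((lam + ((r / K * x0 : ℝ) : ℂ)) *
          (lam + (d1 : ℂ) - (d1 : ℂ) * Complex.exp (-lam * (τ1 : ℂ)))
        + ((c1 * d1 * y0 : ℝ) : ℂ) * Complex.exp (-lam * (τ1 : ℂ))) *
      (lam + (d2 : ℂ) - ((e2 * c2 * y0 : ℝ) : ℂ) * Complex.exp (-lam * (τ2 : ℂ))) ≠ 0 := by
  intro lam hre
  have hP : 0 < e1 * c1 * K := by positivity
  have hthird : e1 * c1 * K * (1 / 3) < d1 :=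
    (mul_le_mul_of_nonneg_left (le_max_left _ _) hP.le).trans_lt hlow
  have hpred : e1 * c1 * K * (1 - c1 * d2 / (e2 * c2 * r)) < d1 :=
    (mul_le_mul_of_nonneg_left (le_max_right _ _) hP.le).trans_lt hlow
  have hprey : 0 < c1 * y0 := by
    rw [hy0]; field_simp; nlinarith
  have hself : c1 * y0 < 2 * (r / K * x0) := by
    rw [hy0, hx0]; field_simp; nlinarith
  have hpredator : |e2 * c2 * y0| < d2 := by
    rw [abs_of_pos (by nlinarith [mul_pos he2 hc2]), hy0]
    field_simp at hpred ⊢; nlinarith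
  refine mul_ne_zero ?_
    (add_sub_mul_ne_zero hre hpredator (norm_exp_neg_mul_ofReal_le_one hre hτ2))
  convert mul_add_sub_mul_add_mul_ne_zero hre hd1 hprey hself
    (norm_exp_neg_mul_ofReal_le_one hre hτ1) using 2
  push_cast; ring

/-- Lemma, part 1 (characteristic-root form): under condition (12),
all roots of the characteristic quasi-polynomial `Q = Q1 ⬝ Q2` of the linearization
of system (1) at `(x0, y0, 0)` lie in the open left half-plane. -/
theorem charPoly_roots_left_halfplane
    (r K d1 d2 c1 c2 e1 e2 τ1 τ2 x0 y0 : ℝ)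
    (hr : 0 < r) (hK : 0 < K) (hd1 : 0 < d1) (hd2 : 0 < d2)
    (hc1 : 0 < c1) (hc2 : 0 < c2) (he1 : 0 < e1) (he2 : 0 < e2)
    (hτ1 : 0 ≤ τ1) (hτ2 : 0 ≤ τ2)
    (hx0 : x0 = d1 / (e1 * c1))
    (hy0 : y0 = r / c1 * (1 - d1 / (e1 * c1 * K)))
    (hlow : e1 * c1 * K * max (1 / 3) (1 - c1 * d2 / (e2 * c2 * r)) < d1)
    (hhigh : d1 < e1 * c1 * K) :
    ∀ lam : ℂ, 0 ≤ lam.re →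
      ((lam + ((r / K * x0 : ℝ) : ℂ)) *
          (lam + (d1 : ℂ) - (d1 : ℂ) * Complex.exp (-lam * (τ1 : ℂ)))
        + ((c1 * d1 * y0 : ℝ) : ℂ) * Complex.exp (-lam * (τ1 : ℂ))) *
      (lam + (d2 : ℂ) - ((e2 * c2 * y0 : ℝ) : ℂ) * Complex.exp (-lam * (τ2 : ℂ))) ≠ 0 :=
  charPoly_roots_left_halfplane_general r K d1 d2 c1 c2 e1 e2 τ1 τ2 x0 y0 hr hK hd1 hc1 hc2 he1 he2
    hτ1 hτ2 hx0 hy0 hlow hhigh
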